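/- Let U ⊆ ℂ² be open and λ : U → ℂ smooth satisfying the integrability equation ∂λ/∂x̄ + conj(λ)·∂λ/∂ȳ = 0. Define the first-order operators ∂_F f := ∂f/∂x + λ·∂f/∂y and ∂̄_F f := ∂f/∂x̄ + conj(λ)·∂f/∂ȳ. Then for every C² function f : U → ℂ one has ∂_F(∂̄_F f) = ∂̄_F(∂_F f) on U, i.e. the integrability of the foliation guarantees that the operators ∂_F and ∂̄_F commute. -/

import Mathlib

open Complex ComplexConjugate

/-- Wirtinger derivative `∂f/∂x` of `f : ℂ² → ℂ`, via the real Fréchet derivative. -/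
noncomputable def wdx (f : ℂ × ℂ → ℂ) (p : ℂ × ℂ) : ℂ :=
  (1 / 2 : ℂ) * (fderiv ℝ f p (1, 0) - Complex.I * fderiv ℝ f p (Complex.I, 0))

/-- Wirtinger derivative `∂f/∂x̄`. -/
noncomputable def wdxbar (f : ℂ × ℂ → ℂ) (p : ℂ × ℂ) : ℂ :=
  (1 / 2 : ℂ) * (fderiv ℝ f p (1, 0) + Complex.I * fderiv ℝ f p (Complex.I, 0))

/-- Wirtinger derivative `∂f/∂y`. -/
noncomputable def wdy (f : ℂ × ℂ → ℂ) (p : ℂ × ℂ) : ℂ :=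
  (1 / 2 : ℂ) * (fderiv ℝ f p (0, 1) - Complex.I * fderiv ℝ f p (0, Complex.I))

/-- Wirtinger derivative `∂f/∂ȳ`. -/
noncomputable def wdybar (f : ℂ × ℂ → ℂ) (p : ℂ × ℂ) : ℂ :=
  (1 / 2 : ℂ) * (fderiv ℝ f p (0, 1) + Complex.I * fderiv ℝ f p (0, Complex.I))

/-- The leafwise operator `∂_F f = ∂f/∂x + λ·∂f/∂y`. -/
noncomputable def dF (lam f : ℂ × ℂ → ℂ) (p : ℂ × ℂ) : ℂ :=
  wdx f p + lam p * wdy f p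

/-- The leafwise operator `∂̄_F f = ∂f/∂x̄ + conj(λ)·∂f/∂ȳ`. -/
noncomputable def dFbar (lam f : ℂ × ℂ → ℂ) (p : ℂ × ℂ) : ℂ :=
  wdxbar f p + conj (lam p) * wdybar f p

/-- For a smooth slope `λ` on an open `U ⊆ ℂ²` satisfying the integrability equation,
the leafwise operators `∂_F` and `∂̄_F` commute on every `C²` function `f`. -/
theorem stmt6 (U : Set (ℂ × ℂ)) (hU : IsOpen U)
    (lam : ℂ × ℂ → ℂ)
    (hsm : ContDiffOn ℝ (⊤ : ℕ∞) lam U)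
    (hint : ∀ p ∈ U, wdxbar lam p + conj (lam p) * wdybar lam p = 0)
    (f : ℂ × ℂ → ℂ) (hf : ContDiffOn ℝ 2 f U) :
    ∀ p ∈ U, dF lam (dFbar lam f) p = dFbar lam (dF lam f) p := by
  intro p hp
  have hmem : U ∈ nhds p := hU.mem_nhds hp
  have hfp : ContDiffAt ℝ 2 f p := (hf p hp).contDiffAt hmem
  have hlam : DifferentiableAt ℝ lam p :=
    ((hsm p hp).contDiffAt hmem).differentiableAt (by simp)
  have hdf' : DifferentiableAt ℝ (fderiv ℝ f) p :=
    (hfp.fderiv_right (m := 1) (by norm_num)).differentiableAt one_ne_zero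
  have hA : HasFDerivAt (fderiv ℝ f) (fderiv ℝ (fderiv ℝ f) p) p := hdf'.hasFDerivAt
  set A := fderiv ℝ (fderiv ℝ f) p with hAdef
  set B := fderiv ℝ lam p with hBdef
  have hev : ∀ᶠ y in nhds p, HasFDerivAt f (fderiv ℝ f y) y := by
    filter_upwards [hmem] with y hy
    exact (((hf y hy).contDiffAt (hU.mem_nhds hy)).differentiableAt
      (by norm_num)).hasFDerivAt
  have hsymm : ∀ v w : ℂ × ℂ, A v w = A w v := fun v w =>
    second_derivative_symmetric_of_eventually hev hA v w
  -- derivative of evaluation of fderiv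
  have hev1 : ∀ v : ℂ × ℂ, HasFDerivAt (fun q => fderiv ℝ f q v)
      ((ContinuousLinearMap.apply ℝ ℂ v).comp A) p := fun v =>
    ((ContinuousLinearMap.apply ℝ ℂ v).hasFDerivAt).comp p hA
  have hB : HasFDerivAt lam B p := hlam.hasFDerivAt
  have hconj : HasFDerivAt (fun q => conj (lam q))
      ((Complex.conjCLE.toContinuousLinearMap).comp B) p := by
    have := (Complex.conjCLE.toContinuousLinearMap.hasFDerivAt).comp p hB
    exact this
  -- building blocks
  have hwx := (((hev1 (1,0)).sub ((hev1 (Complex.I,0)).const_mul Complex.I)).const_mul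
      ((1:ℂ)/2))
  have hwxb := (((hev1 (1,0)).add ((hev1 (Complex.I,0)).const_mul Complex.I)).const_mul
      ((1:ℂ)/2))
  have hwy := (((hev1 (0,1)).sub ((hev1 (0,Complex.I)).const_mul Complex.I)).const_mul
      ((1:ℂ)/2))
  have hwyb := (((hev1 (0,1)).add ((hev1 (0,Complex.I)).const_mul Complex.I)).const_mul
      ((1:ℂ)/2))
  have hg0 := hwxb.add (hconj.mul hwyb)
  have hh0 := hwx.add (hB.mul hwy)
  have hg : HasFDerivAt (dFbar lam f) _ p := hg0
  have hh : HasFDerivAt (dF lam f) _ p := hh0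
  have hintp := hint p hp
  simp only [wdxbar, wdybar, ← hBdef] at hintp
  have hintc := congrArg conj hintp
  simp only [map_add, map_mul, map_zero, map_div₀, map_one, map_ofNat,
    Complex.conj_I, Complex.conj_conj] at hintc
  show wdx (dFbar lam f) p + lam p * wdy (dFbar lam f) p
      = wdxbar (dF lam f) p + conj (lam p) * wdybar (dF lam f) p
  simp only [wdx, wdy, wdxbar, wdybar, hg.fderiv, hh.fderiv]
  simp only [ContinuousLinearMap.add_apply, ContinuousLinearMap.sub_apply, ContinuousLinearMap.smul_apply,
    ContinuousLinearMap.comp_apply, ContinuousLinearMap.apply_apply,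
    ContinuousLinearEquiv.coe_coe, Complex.conjCLE_apply, smul_eq_mul,
    wdx, wdy, wdxbar, wdybar, ← hAdef, ← hBdef, Pi.add_apply, Pi.sub_apply]
  rw [hsymm (Complex.I,0) (1,0), hsymm ((0:ℂ),(1:ℂ)) (1,0), hsymm ((0:ℂ),Complex.I) (1,0),
    hsymm ((0:ℂ),(1:ℂ)) (Complex.I,0), hsymm ((0:ℂ),Complex.I) (Complex.I,0),
    hsymm ((0:ℂ),Complex.I) ((0:ℂ),(1:ℂ))]
  linear_combination ((1:ℂ)/2 * ((fderiv ℝ f p) (0,1) + Complex.I * (fderiv ℝ f p) (0,Complex.I))) * hintc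
    - ((1:ℂ)/2 * ((fderiv ℝ f p) (0,1) - Complex.I * (fderiv ℝ f p) (0,Complex.I))) * hintp
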